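/- The softmax map σ : ℝ^K → ℝ^K defined by σ(z)_k = exp(z_k) / ∑_{j=1}^K exp(z_j) is Lipschitz continuous with constant 1 with respect to the Euclidean (ℓ²) norm: for all z, z' ∈ ℝ^K, ‖σ(z) − σ(z')‖₂ ≤ ‖z − z'‖₂. -/

import Mathlib

/-!
The Jacobian of softmax at `z` is `diag p - p pᵀ` with `p = σ(z)` a probability vector; it sends
`x` to `p ⊙ (x - m)`, where `m = ∑ p_k x_k`. Since `p_k² ≤ p_k`,
`∑ p_k² (x_k - m)² ≤ ∑ p_k (x_k - m)² = ∑ p_k x_k² - m² ≤ ∑ x_k²`, so the Jacobian has operator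
norm at most `1` everywhere, and the mean value inequality on the convex space `ℝ^K` gives the
Lipschitz bound.
-/

/-- The softmax map `σ : ℝ^K → ℝ^K`, `σ(z)_k = exp(z_k) / ∑_j exp(z_j)`,
viewed as a map of Euclidean space (ℓ² norm). -/
noncomputable def softmax {K : ℕ} (z : EuclideanSpace ℝ (Fin K)) :
    EuclideanSpace ℝ (Fin K) :=
  WithLp.toLp 2 (fun k => Real.exp (z k) / ∑ j, Real.exp (z j))

open Finset Real

section ProbabilityVector

variable {ι : Type*} [Fintype ι] {p : ι → ℝ}

theorem sum_sq_mul_sub_weightedMean_le (hp0 : ∀ k, 0 ≤ p k) (hp1 : ∑ k, p k = 1)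
    (x : ι → ℝ) : ∑ k, (p k * (x k - ∑ j, p j * x j)) ^ 2 ≤ ∑ k, x k ^ 2 := by
  set m := ∑ j, p j * x j with hm
  have hp_le_one : ∀ k, p k ≤ 1 := fun k => hp1 ▸ single_le_sum (fun j _ => hp0 j) (mem_univ k)
  have hvariance : ∑ k, p k * (x k - m) ^ 2 = ∑ k, p k * x k ^ 2 - m ^ 2 := by
    have hexpand : ∀ k, p k * (x k - m) ^ 2 = p k * x k ^ 2 - 2 * m * (p k * x k) + m ^ 2 * p k :=
      fun k => by ring
    rw [sum_congr rfl fun k _ => hexpand k, sum_add_distrib, sum_sub_distrib, ← mul_sum,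
      ← mul_sum, ← hm, hp1]
    ring
  calc ∑ k, (p k * (x k - m)) ^ 2 ≤ ∑ k, p k * (x k - m) ^ 2 := sum_le_sum fun k _ => by
        rw [mul_pow]
        exact mul_le_mul_of_nonneg_right (pow_le_of_le_one (hp0 k) (hp_le_one k) two_ne_zero)
          (sq_nonneg _)
    _ = ∑ k, p k * x k ^ 2 - m ^ 2 := hvariance
    _ ≤ ∑ k, p k * x k ^ 2 := sub_le_self _ (sq_nonneg m)
    _ ≤ ∑ k, x k ^ 2 := sum_le_sum fun k _ => mul_le_of_le_one_left (sq_nonneg _) (hp_le_one k)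

noncomputable def diagSubOuter (p : ι → ℝ) : EuclideanSpace ℝ ι →L[ℝ] EuclideanSpace ℝ ι :=
  LinearMap.toContinuousLinearMap
    { toFun x := WithLp.toLp 2 fun k => p k * (x k - ∑ j, p j * x j)
      map_add' x y := by
        ext k
        simp only [PiLp.add_apply, mul_add, sum_add_distrib]
        ring
      map_smul' c x := by
        ext k
        simp only [PiLp.smul_apply, smul_eq_mul, RingHom.id_apply, mul_left_comm _ c, ← mul_sum]
        ring }

@[simp]
theorem diagSubOuter_apply (p : ι → ℝ) (x : EuclideanSpace ℝ ι) (k : ι) :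
    diagSubOuter p x k = p k * (x k - ∑ j, p j * x j) := rfl

theorem norm_diagSubOuter_le_one (hp0 : ∀ k, 0 ≤ p k) (hp1 : ∑ k, p k = 1) :
    ‖diagSubOuter p‖ ≤ 1 :=
  ContinuousLinearMap.opNorm_le_bound _ zero_le_one fun x => by
    rw [one_mul, EuclideanSpace.norm_eq, EuclideanSpace.norm_eq]
    refine Real.sqrt_le_sqrt ?_
    simpa only [diagSubOuter_apply, Real.norm_eq_abs, sq_abs] using
      sum_sq_mul_sub_weightedMean_le hp0 hp1 x

end ProbabilityVector

section Softmax

variable {K : ℕ}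

@[simp]
theorem softmax_apply (z : EuclideanSpace ℝ (Fin K)) (k : Fin K) :
    softmax z k = exp (z k) / ∑ j, exp (z j) := rfl

theorem softmax_nonneg (z : EuclideanSpace ℝ (Fin K)) (k : Fin K) : 0 ≤ softmax z k := by
  rw [softmax_apply]
  positivity

variable [NeZero K]

theorem sum_exp_pos (z : EuclideanSpace ℝ (Fin K)) : 0 < ∑ j, exp (z j) :=
  sum_pos (fun _ _ => exp_pos _) univ_nonempty

theorem sum_softmax (z : EuclideanSpace ℝ (Fin K)) : ∑ k, softmax z k = 1 := by
  simp only [softmax_apply, ← sum_div]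
  exact div_self (sum_exp_pos z).ne'

theorem hasFDerivAt_softmax (z : EuclideanSpace ℝ (Fin K)) :
    HasFDerivAt softmax (diagSubOuter ⇑(softmax z)) z := by
  rw [← hasFDerivWithinAt_univ, hasFDerivWithinAt_piLp]
  intro k
  have hS : ∑ j, exp (z j) ≠ 0 := (sum_exp_pos z).ne'
  have hexp := fun j => (PiLp.hasFDerivAt_apply (𝕜 := ℝ) 2 z j).exp
  have hinv := (hasDerivAt_inv hS).comp_hasFDerivAt z (.fun_sum fun j _ => hexp j)
  refine ((hexp k).mul hinv).hasFDerivWithinAt.congr_fderiv ?_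
  ext x
  simp only [ContinuousLinearMap.comp_apply, add_apply, smul_apply, _root_.sum_apply,
    Function.comp_apply, PiLp.proj_apply, smul_eq_mul, diagSubOuter_apply, softmax_apply]
  simp only [div_mul_eq_mul_div, ← sum_div]
  field_simp
  ring

theorem lipschitzWith_one_softmax : LipschitzWith 1 (softmax (K := K)) := by
  rw [← lipschitzOnWith_univ]
  exact convex_univ.lipschitzOnWith_of_nnnorm_hasFDerivWithin_le
    (fun z _ => (hasFDerivAt_softmax z).hasFDerivWithinAt)
    (fun z _ => by exact_mod_cast norm_diagSubOuter_le_one (softmax_nonneg z) (sum_softmax z))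

end Softmax

/-- The softmax map is Lipschitz with constant 1 with respect to the
Euclidean (ℓ²) norm: `‖σ(z) − σ(z')‖₂ ≤ ‖z − z'‖₂`. -/
theorem softmax_lipschitz_one {K : ℕ} (hK : 1 ≤ K)
    (z z' : EuclideanSpace ℝ (Fin K)) :
    ‖softmax z - softmax z'‖ ≤ ‖z - z'‖ := by
  have : NeZero K := ⟨by omega⟩
  simpa [dist_eq_norm] using lipschitzWith_one_softmax.dist_le_mul z z'
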